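/- Let (D_λ)_{λ∈Λ} be a family of nontrivial commutative rings and R = ∏_{λ∈Λ} D_λ. The following are equivalent: (a) (U) = {a ∈ R | S(a) ∈ U} is a maximal ideal of R for every ultrafilter U in B; (b) for every λ ∈ Λ, max(D_λ) is proconstructible in spec(D_λ), i.e. for every ultrafilter F on the set max(D_λ) the set X_F = {r ∈ D_λ | V(r) ∈ F} is a maximal ideal of D_λ; (c) every D_λ satisfies property (++), i.e. for every r ∈ D_λ there exists d ∈ D_λ with D(r) = V(d). -/

import Mathlib

/-!
Common setup: `Λ` is an index set, `D λ` a family of commutative rings,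
`R = ∏ λ, D λ` the product ring, and
`B = ∏ λ, P(max (D λ))` the product Boolean algebra of the power sets of the
sets of maximal ideals, realized as the Pi type `∀ l, Set (MaximalSpectrum (D l))`
with its componentwise Boolean algebra structure (meet = componentwise ∩,
join = componentwise ∪, `⊥ = (∅)_λ`, complement componentwise, order = componentwise ⊆).
-/

variable {Λ : Type*} {D : Λ → Type*}

/-- `S(a) = (V(a_λ))_λ ∈ B`, where `V(x)` is the set of maximal ideals containing `x`. -/
def SFam [∀ l, CommRing (D l)] (a : ∀ l, D l) : ∀ l, Set (MaximalSpectrum (D l)) :=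
  fun l => {P | a l ∈ P.asIdeal}

/-- `z(x) = {λ | x_λ = 0}`. -/
def ZFam [∀ l, CommRing (D l)] (x : ∀ l, D l) : Set Λ := {l | x l = 0}

/-- A filter in a Boolean algebra: a nonempty subset not containing `⊥`, closed
under meets, and upward closed. -/
def IsBFilter {B : Type*} [BooleanAlgebra B] (U : Set B) : Prop :=
  U.Nonempty ∧ ⊥ ∉ U ∧ (∀ X ∈ U, ∀ Y ∈ U, X ⊓ Y ∈ U) ∧ (∀ Y ∈ U, ∀ Z, Y ≤ Z → Z ∈ U)

/-- An ultrafilter in a Boolean algebra: a filter containing `Y` or `Yᶜ` for every `Y`. -/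
def IsBUltrafilter {B : Type*} [BooleanAlgebra B] (U : Set B) : Prop :=
  IsBFilter U ∧ ∀ Y, Y ∈ U ∨ Yᶜ ∈ U

/-- Property (+): for all `r` and all nonzero `a` there is `d` lying in every maximal
ideal containing `a` but not `r`, and in no maximal ideal containing `r`. -/
def PropertyPlus (A : Type*) [CommRing A] : Prop :=
  ∀ r a : A, a ≠ 0 → ∃ d : A,
    (∀ M : Ideal A, M.IsMaximal → a ∈ M → r ∉ M → d ∈ M) ∧
    (∀ M : Ideal A, M.IsMaximal → r ∈ M → d ∉ M)

/-- Property (++): for every `r` there is `d` with `D(r) = V(d)`, i.e. the maximal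
ideals containing `d` are exactly those not containing `r`. -/
def PropertyPlusPlus (A : Type*) [CommRing A] : Prop :=
  ∀ r : A, ∃ d : A, ∀ P : MaximalSpectrum A, d ∈ P.asIdeal ↔ r ∉ P.asIdeal

/-!
(c) ⇒ (a): if `x ∉ (U)`, choose `d` componentwise with `V(d_l) = D(x_l)`; then `S(d) = ¬S(x) ∈ U`,
so `d ∈ (U)`, and `x`, `d` lie in no common maximal ideal, so `(x, d) = R`.
(a) ⇒ (b): for an ultrafilter `F` on `max(D_l)`, the ultrafilter `{Y | Y_l ∈ F}` of `B` gives a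
maximal ideal of `R` whose projection to `D_l` is `X_F`.
(b) ⇒ (c): let `T` be the intersection of the maximal ideals avoiding `r`; it suffices that
`T + (r)` is the unit ideal. Otherwise `T + (r) ⊆ P` with `P` maximal, and `D(r) ∩ D(z) ≠ ∅` for
all `z ∉ P`. An ultrafilter `F` containing all these sets has `X_F` maximal and disjoint from the
complement of `P`, so `X_F = P ∋ r`, contradicting `D(r) ∈ F`.
-/

open Filter

/-- `max(A)` is proconstructible in `spec(A)`, in its ultrafilter form. -/
def MaxSpecProconstructible (A : Type*) [CommRing A] : Prop :=
  ∀ F : Ultrafilter (MaximalSpectrum A), ∃ M : Ideal A, M.IsMaximal ∧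
    ∀ r : A, r ∈ M ↔ {P : MaximalSpectrum A | r ∈ P.asIdeal} ∈ F

/-- `(U)` is a maximal ideal of `∏ l, D l` for every ultrafilter `U` in `B`. -/
def UltrafilterIdealsMaximal (D : Λ → Type*) [∀ l, CommRing (D l)] : Prop :=
  ∀ U : Set (∀ l, Set (MaximalSpectrum (D l))), IsBUltrafilter U →
    ∃ I : Ideal (∀ l, D l), (∀ a, a ∈ I ↔ SFam a ∈ U) ∧ I.IsMaximal

theorem Ideal.isMaximal_of_forall_notMem_exists_isCoprime {R : Type*} [CommRing R]
    {I : Ideal R} (hI : I ≠ ⊤) (h : ∀ x ∉ I, ∃ d ∈ I, IsCoprime x d) : I.IsMaximal := by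
  refine Ideal.isMaximal_iff.mpr ⟨(Ideal.ne_top_iff_one I).mp hI, fun J x hIJ hxI hxJ => ?_⟩
  obtain ⟨d, hdI, u, v, huv⟩ := h x hxI
  exact huv ▸ J.add_mem (J.mul_mem_left u hxJ) (J.mul_mem_left v (hIJ hdI))

theorem isCoprime_pi_of_forall [∀ l, CommRing (D l)] {x y : ∀ l, D l}
    (h : ∀ l, IsCoprime (x l) (y l)) : IsCoprime x y := by
  choose u v huv using h
  exact ⟨u, v, funext huv⟩

section MaximalSpectrum

variable {A : Type*} [CommRing A]

theorem isCoprime_of_forall_maximalSpectrum {x y : A}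
    (h : ∀ P : MaximalSpectrum A, x ∈ P.asIdeal → y ∉ P.asIdeal) : IsCoprime x y := by
  rw [← Ideal.sup_eq_top_iff_isCoprime]
  by_contra hne
  obtain ⟨P, hP, hle⟩ := Ideal.exists_le_maximal _ hne
  exact h ⟨P, hP⟩ (hle (Ideal.mem_sup_left (Ideal.mem_span_singleton_self x)))
    (hle (Ideal.mem_sup_right (Ideal.mem_span_singleton_self y)))

theorem MaximalSpectrum.setOf_one_mem_eq_empty :
    {P : MaximalSpectrum A | (1 : A) ∈ P.asIdeal} = ∅ :=
  Set.eq_empty_of_forall_notMem fun P h => P.isMaximal.ne_top ((Ideal.eq_top_iff_one _).mpr h)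

theorem exists_ultrafilter_forall_notMem_mem (S : Submonoid A)
    (hS : ∀ s ∈ S, ∃ Q : MaximalSpectrum A, s ∉ Q.asIdeal) :
    ∃ F : Ultrafilter (MaximalSpectrum A), ∀ s ∈ S, {Q | s ∉ Q.asIdeal} ∈ F := by
  let basicOpen (s : S) : Set (MaximalSpectrum A) := {Q | (s : A) ∉ Q.asIdeal}
  have hdir : Directed (· ≥ ·) fun s => 𝓟 (basicOpen s) := fun s t =>
    ⟨s * t, principal_mono.mpr fun Q hQ hs => hQ (Q.asIdeal.mul_mem_right _ hs),
      principal_mono.mpr fun Q hQ ht => hQ (Q.asIdeal.mul_mem_left _ ht)⟩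
  have : NeBot (⨅ s, 𝓟 (basicOpen s)) :=
    iInf_neBot_of_directed' hdir fun s => principal_neBot_iff.mpr (hS s s.2)
  exact ⟨Ultrafilter.of (⨅ s, 𝓟 (basicOpen s)), fun s hs =>
    Ultrafilter.of_le _ (mem_iInf_of_mem ⟨s, hs⟩ (mem_principal_self _))⟩

theorem MaxSpecProconstructible.exists_isMaximal_disjoint (h : MaxSpecProconstructible A)
    (S : Submonoid A) (hS : ∀ s ∈ S, ∃ Q : MaximalSpectrum A, s ∉ Q.asIdeal) :
    ∃ M : Ideal A, M.IsMaximal ∧ ∀ s ∈ S, s ∉ M := by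
  obtain ⟨F, hF⟩ := exists_ultrafilter_forall_notMem_mem S hS
  obtain ⟨M, hM, hMF⟩ := h F
  exact ⟨M, hM, fun s hs hsM => Ultrafilter.compl_mem_iff_notMem.mp (hF s hs) ((hMF s).mp hsM)⟩

theorem MaxSpecProconstructible.propertyPlusPlus (h : MaxSpecProconstructible A) :
    PropertyPlusPlus A := by
  intro r
  let T : Ideal A := ⨅ (Q : MaximalSpectrum A) (_ : r ∉ Q.asIdeal), Q.asIdeal
  have hT : T ⊔ Ideal.span {r} = ⊤ := by
    by_contra hne
    obtain ⟨P, hP, hle⟩ := Ideal.exists_le_maximal _ hne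
    have hrP : r ∈ P := hle (Ideal.mem_sup_right (Ideal.mem_span_singleton_self r))
    have hS : ∀ s ∈ Submonoid.powers r ⊔ P.primeCompl,
        ∃ Q : MaximalSpectrum A, s ∉ Q.asIdeal := by
      intro s hs
      obtain ⟨y, hy, z, hzP, rfl⟩ := Submonoid.mem_sup.mp hs
      have hzT : z ∉ T := fun hzT => hzP (hle (Ideal.mem_sup_left hzT))
      simp only [T, Submodule.mem_iInf, not_forall] at hzT
      obtain ⟨Q, hrQ, hzQ⟩ := hzT
      exact ⟨Q, Q.asIdeal.primeCompl.mul_mem (Submonoid.powers_le.mpr hrQ hy) hzQ⟩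
    obtain ⟨M, hM, hMS⟩ := h.exists_isMaximal_disjoint _ hS
    have hMP : M = P := hM.eq_of_le hP.ne_top fun y hyM => by_contra fun hyP =>
      hMS y (Submonoid.mem_sup_right hyP) hyM
    exact hMS r (Submonoid.mem_sup_left (Submonoid.mem_powers r)) (hMP ▸ hrP)
  obtain ⟨d, hdT, y, hy, hdy⟩ := Ideal.isCoprime_iff_exists.mp (Ideal.isCoprime_iff_sup_eq.mpr hT)
  refine ⟨d, fun P => ⟨fun hdP hrP => ?_, fun hrP => ?_⟩⟩
  · obtain ⟨b, rfl⟩ := Ideal.mem_span_singleton'.mp hy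
    exact P.isMaximal.ne_top ((Ideal.eq_top_iff_one _).mpr
      (hdy ▸ P.asIdeal.add_mem hdP (P.asIdeal.mul_mem_left b hrP)))
  · simp only [T, Submodule.mem_iInf] at hdT
    exact hdT P hrP

end MaximalSpectrum

theorem isBUltrafilter_setOf_apply_mem {X : Λ → Type*} (l : Λ) (F : Ultrafilter (X l)) :
    IsBUltrafilter {Y : ∀ l, Set (X l) | Y l ∈ F} :=
  ⟨⟨⟨⊤, univ_mem⟩, empty_notMem (F : Filter (X l)), fun _ hX _ hY => inter_mem hX hY,
      fun _ hY _ hYZ => mem_of_superset hY (hYZ l)⟩,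
    fun Y => (em (Y l ∈ F)).imp_right Ultrafilter.compl_mem_iff_notMem.mpr⟩

theorem UltrafilterIdealsMaximal.maxSpecProconstructible [∀ l, CommRing (D l)]
    (h : UltrafilterIdealsMaximal D) (l : Λ) : MaxSpecProconstructible (D l) := by
  intro F
  obtain ⟨I, hI, hImax⟩ := h _ (isBUltrafilter_setOf_apply_mem l F)
  have hsurj : Function.Surjective (Pi.evalRingHom D l) := Function.surjective_eval l
  have hmem (r : D l) : r ∈ I.map (Pi.evalRingHom D l) ↔
      {P : MaximalSpectrum (D l) | r ∈ P.asIdeal} ∈ F := by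
    rw [Ideal.mem_map_iff_of_surjective _ hsurj]
    constructor
    · rintro ⟨a, ha, rfl⟩
      exact (hI a).mp ha
    · intro hr
      obtain ⟨a, rfl⟩ := hsurj r
      exact ⟨a, (hI a).mpr hr, rfl⟩
  refine ⟨_, (Ideal.map_eq_top_or_isMaximal_of_surjective _ hsurj hImax).resolve_left
    fun htop => ?_, hmem⟩
  have h1 := (hmem 1).mp (htop ▸ Submodule.mem_top)
  rw [MaximalSpectrum.setOf_one_mem_eq_empty] at h1
  exact empty_notMem (F : Filter (MaximalSpectrum (D l))) h1

section Product

variable [∀ l, CommRing (D l)]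

theorem SFam_zero : SFam (0 : ∀ l, D l) = ⊤ := by
  funext l
  exact Set.eq_univ_of_forall fun P => P.asIdeal.zero_mem

theorem SFam_one : SFam (1 : ∀ l, D l) = ⊥ :=
  funext fun _ => MaximalSpectrum.setOf_one_mem_eq_empty

theorem inf_le_SFam_add (a b : ∀ l, D l) : SFam a ⊓ SFam b ≤ SFam (a + b) :=
  fun _ P hP => P.asIdeal.add_mem hP.1 hP.2

theorem SFam_le_SFam_mul (c a : ∀ l, D l) : SFam a ≤ SFam (c * a) :=
  fun l P hP => P.asIdeal.mul_mem_left (c l) hP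

/-- The ideal `(U)`. -/
def IsBFilter.ideal {U : Set (∀ l, Set (MaximalSpectrum (D l)))} (hU : IsBFilter U) :
    Ideal (∀ l, D l) where
  carrier := {a | SFam a ∈ U}
  zero_mem' := by
    obtain ⟨⟨Y, hY⟩, -, -, hup⟩ := hU
    show SFam 0 ∈ U
    exact SFam_zero (D := D) ▸ hup Y hY ⊤ le_top
  add_mem' {a b} ha hb := hU.2.2.2 _ (hU.2.2.1 _ ha _ hb) _ (inf_le_SFam_add a b)
  smul_mem' c a ha := hU.2.2.2 _ ha _ (SFam_le_SFam_mul c a)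

theorem ultrafilterIdealsMaximal_of_propertyPlusPlus (h : ∀ l, PropertyPlusPlus (D l)) :
    UltrafilterIdealsMaximal D := by
  intro U hU
  refine ⟨hU.1.ideal, fun a => Iff.rfl,
    Ideal.isMaximal_of_forall_notMem_exists_isCoprime ?_ fun x hx => ?_⟩
  · rw [Ideal.ne_top_iff_one]
    exact fun h1 => hU.1.2.1 (SFam_one (D := D) ▸ h1)
  choose d hd using fun l => h l (x l)
  have hSd : SFam d = (SFam x)ᶜ := funext fun l => Set.ext fun P => hd l P
  refine ⟨d, show SFam d ∈ U from hSd ▸ (hU.2 (SFam x)).resolve_left hx, ?_⟩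
  exact isCoprime_pi_of_forall fun l =>
    isCoprime_of_forall_maximalSpectrum fun P hxP hdP => (hd l P).mp hdP hxP

end Product

theorem stmt_12_general [∀ l, CommRing (D l)] :
    ((∀ U : Set (∀ l, Set (MaximalSpectrum (D l))), IsBUltrafilter U →
        ∃ I : Ideal (∀ l, D l), (∀ a, a ∈ I ↔ SFam a ∈ U) ∧ I.IsMaximal) ↔
      (∀ l, ∀ F : Ultrafilter (MaximalSpectrum (D l)),
        ∃ M : Ideal (D l), M.IsMaximal ∧
          ∀ r : D l, r ∈ M ↔ {P : MaximalSpectrum (D l) | r ∈ P.asIdeal} ∈ F)) ∧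
    ((∀ l, ∀ F : Ultrafilter (MaximalSpectrum (D l)),
        ∃ M : Ideal (D l), M.IsMaximal ∧
          ∀ r : D l, r ∈ M ↔ {P : MaximalSpectrum (D l) | r ∈ P.asIdeal} ∈ F) ↔
      (∀ l, PropertyPlusPlus (D l))) := by
  have hab := UltrafilterIdealsMaximal.maxSpecProconstructible (D := D)
  have hbc := fun (hb : ∀ l, MaxSpecProconstructible (D l)) l => (hb l).propertyPlusPlus
  have hca := ultrafilterIdealsMaximal_of_propertyPlusPlus (D := D)
  exact ⟨⟨hab, fun hb => hca (hbc hb)⟩, ⟨hbc, fun hc => hab (hca hc)⟩⟩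

/-- Equivalence of: (a) `(U)` is a maximal ideal of `R` for every ultrafilter `U` in
`B`; (b) every set of maximal ideals of `D l` is proconstructible in the prime
spectrum (for every ultrafilter `F` on the set of maximal ideals, the set of `r` with
`V r ∈ F` is a maximal ideal); (c) every `D l` satisfies property (++). -/
theorem stmt_12 [∀ l, CommRing (D l)] [∀ l, Nontrivial (D l)] :
    ((∀ U : Set (∀ l, Set (MaximalSpectrum (D l))), IsBUltrafilter U →
        ∃ I : Ideal (∀ l, D l), (∀ a, a ∈ I ↔ SFam a ∈ U) ∧ I.IsMaximal) ↔
      (∀ l, ∀ F : Ultrafilter (MaximalSpectrum (D l)),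
        ∃ M : Ideal (D l), M.IsMaximal ∧
          ∀ r : D l, r ∈ M ↔ {P : MaximalSpectrum (D l) | r ∈ P.asIdeal} ∈ F)) ∧
    ((∀ l, ∀ F : Ultrafilter (MaximalSpectrum (D l)),
        ∃ M : Ideal (D l), M.IsMaximal ∧
          ∀ r : D l, r ∈ M ↔ {P : MaximalSpectrum (D l) | r ∈ P.asIdeal} ∈ F) ↔
      (∀ l, PropertyPlusPlus (D l))) :=
  stmt_12_general
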